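/- Let A be a Banach algebra whose weak left topological center Z̃₁ˡ(A**) equals (the canonical image of) A. Then A is a right ideal in A** with respect to the first Arens product. -/

import Mathlib

/-!
For `a ∈ A` and `l ∈ A***` annihilating `A`, weak-left-centrality of `a` makes `G ↦ l (a □ G)` a
weak-* continuous functional, i.e. evaluation at some `f ∈ A*`. Since `a □ b = a b ∈ A`, `f`
vanishes on `A`, so `l (a □ F) = F f = 0`. As `A` is closed in `A**`, Hahn–Banach gives `a □ F ∈ A`.
-/

open NormedSpace ContinuousLinearMap

set_option maxSynthPendingDepth 2

noncomputable section

section Core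

variable (X Y Z : Type*)
  [NormedAddCommGroup X] [NormedSpace ℝ X]
  [NormedAddCommGroup Y] [NormedSpace ℝ Y]
  [NormedAddCommGroup Z] [NormedSpace ℝ Z]

/-- The dual (adjoint) map of a continuous linear map. -/
def dualMapCLM (T : X →L[ℝ] Y) : StrongDual ℝ Y →L[ℝ] StrongDual ℝ X :=
  (ContinuousLinearMap.compSL X Y ℝ (RingHom.id ℝ) (RingHom.id ℝ)).flip T

variable {X Y Z}

/-- The adjoint of a continuous bilinear map `m : X × Y → Z`, as a bilinear map
`Z* × X → Y*`, `⟨adjBil m z' x, y⟩ = ⟨z', m x y⟩`. -/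
def adjBil (m : X →L[ℝ] Y →L[ℝ] Z) : StrongDual ℝ Z →L[ℝ] X →L[ℝ] StrongDual ℝ Y :=
  ((ContinuousLinearMap.compSL X (Y →L[ℝ] Z) (StrongDual ℝ Y) (RingHom.id ℝ) (RingHom.id ℝ)).flip m).comp
    (ContinuousLinearMap.compSL Y Z ℝ (RingHom.id ℝ) (RingHom.id ℝ))

/-- The first Arens extension of a continuous bilinear map `X × Y → Z`
to the biduals, `X** × Y** → Z**`. -/
def arensExt (m : X →L[ℝ] Y →L[ℝ] Z) :
    StrongDual ℝ (StrongDual ℝ X) →L[ℝ] StrongDual ℝ (StrongDual ℝ Y) →L[ℝ] StrongDual ℝ (StrongDual ℝ Z) :=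
  adjBil (adjBil (adjBil m))

variable (E : Type*) [NormedAddCommGroup E] [NormedSpace ℝ E]

/-- The weak-* topology on the bidual `E**`, i.e. the topology of pointwise
convergence on `E*`. -/
def weakStarTop : TopologicalSpace (StrongDual ℝ (StrongDual ℝ E)) :=
  ⨅ f : StrongDual ℝ E, TopologicalSpace.induced (fun F => F f) inferInstance

/-- The weak topology on the bidual `E**`, i.e. the topology of pointwise
convergence on `E***`. -/
def weakTop : TopologicalSpace (StrongDual ℝ (StrongDual ℝ E)) :=
  ⨅ Φ : StrongDual ℝ (StrongDual ℝ (StrongDual ℝ E)), TopologicalSpace.induced (fun F => Φ F) inferInstance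

end Core

section Algebra

variable (A : Type*) [NonUnitalNormedRing A] [NormedSpace ℝ A]
  [IsScalarTower ℝ A A] [SMulCommClass ℝ A A]

/-- The first Arens product on the bidual of a Banach algebra. -/
def arens1 : StrongDual ℝ (StrongDual ℝ A) →L[ℝ] StrongDual ℝ (StrongDual ℝ A) →L[ℝ] StrongDual ℝ (StrongDual ℝ A) :=
  arensExt (ContinuousLinearMap.mul ℝ A)

/-- The second Arens product on the bidual of a Banach algebra. -/
def arens2 (F G : StrongDual ℝ (StrongDual ℝ A)) : StrongDual ℝ (StrongDual ℝ A) :=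
  arensExt ((ContinuousLinearMap.mul ℝ A).flip) G F

/-- The weak left topological center of `A**`: those `F` such that
`G ↦ F □ G` is weak-*-to-weak continuous. -/
def weakLeftCenter : Set (StrongDual ℝ (StrongDual ℝ A)) :=
  { F | ∀ Φ : StrongDual ℝ (StrongDual ℝ (StrongDual ℝ A)),
      @Continuous _ _ (weakStarTop A) _ fun G => Φ (arens1 A F G) }

/-- The left topological center of `A**`: those `F` such that
`G ↦ F □ G` is weak-*-to-weak-* continuous. -/
def leftCenter : Set (StrongDual ℝ (StrongDual ℝ A)) :=
  { F | ∀ f : StrongDual ℝ A,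
      @Continuous _ _ (weakStarTop A) _ fun G => arens1 A F G f }

end Algebra

lemma Submodule.mem_of_forall_dual_eq_zero {E : Type*} [NormedAddCommGroup E] [NormedSpace ℝ E]
    (M : Submodule ℝ E) [IsClosed (M : Set E)] {x : E}
    (h : ∀ l : StrongDual ℝ E, (∀ m ∈ M, l m = 0) → l x = 0) : x ∈ M := by
  by_contra hx
  obtain ⟨g, hg⟩ := SeparatingDual.exists_ne_zero (R := ℝ) (x := M.mkQ x)
    (by simpa [Submodule.Quotient.mk_eq_zero] using hx)
  exact hg (h (g.comp M.mkQL) fun m hm => by simp [(Submodule.Quotient.mk_eq_zero M).2 hm])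

lemma exists_eq_apply_of_continuous_weakStarTop {E : Type*} [NormedAddCommGroup E] [NormedSpace ℝ E]
    (φ : StrongDual ℝ (StrongDual ℝ E) →ₗ[ℝ] ℝ) (hφ : @Continuous _ _ (weakStarTop E) _ φ) :
    ∃ f : StrongDual ℝ E, ∀ G, φ G = G f := by
  let eval : StrongDual ℝ E →ₗ[ℝ] StrongDual ℝ (StrongDual ℝ E) →ₗ[ℝ] ℝ :=
    (ContinuousLinearMap.coeLM ℝ).comp (inclusionInDoubleDual ℝ (StrongDual ℝ E)).toLinearMap
  have hspan : φ ∈ Submodule.span ℝ (Set.range eval) := (LinearMap.mem_span_iff_continuous φ).2 hφ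
  rw [← LinearMap.coe_range, Submodule.span_eq] at hspan
  obtain ⟨f, rfl⟩ := hspan
  exact ⟨f, fun G => rfl⟩

section ArensProduct

variable {A : Type*} [NonUnitalNormedRing A] [NormedSpace ℝ A] [IsScalarTower ℝ A A]
  [SMulCommClass ℝ A A]

lemma arens1_inclusionInDoubleDual (a b : A) :
    arens1 A (inclusionInDoubleDual ℝ A a) (inclusionInDoubleDual ℝ A b) =
      inclusionInDoubleDual ℝ A (a * b) :=
  rfl

lemma exists_eq_apply_of_mem_weakLeftCenter {F : StrongDual ℝ (StrongDual ℝ A)}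
    (hF : F ∈ weakLeftCenter A) (l : StrongDual ℝ (StrongDual ℝ (StrongDual ℝ A))) :
    ∃ f : StrongDual ℝ A, ∀ G, l (arens1 A F G) = G f :=
  exists_eq_apply_of_continuous_weakStarTop (l.comp (arens1 A F)).toLinearMap (hF l)

end ArensProduct

/-- If the weak left topological center of `A**` equals the canonical
image of `A`, then `A` is a right ideal in `A**` (first Arens product). -/
theorem stmt1 (A : Type*) [NonUnitalNormedRing A] [NormedSpace ℝ A]
    [IsScalarTower ℝ A A] [SMulCommClass ℝ A A] [CompleteSpace A]
    (h : weakLeftCenter A = Set.range (inclusionInDoubleDual ℝ A)) :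
    ∀ (a : A) (F : StrongDual ℝ (StrongDual ℝ A)),
      arens1 A (inclusionInDoubleDual ℝ A a) F ∈ Set.range (inclusionInDoubleDual ℝ A) := by
  intro a F
  let j := (inclusionInDoubleDual ℝ A).toLinearMap
  have : IsClosed (LinearMap.range j : Set (StrongDual ℝ (StrongDual ℝ A))) := by
    rw [LinearMap.coe_range]
    exact (inclusionInDoubleDualLi ℝ).isometry.isClosedEmbedding.isClosed_range
  refine (LinearMap.range j).mem_of_forall_dual_eq_zero fun l hl => ?_
  have ha : inclusionInDoubleDual ℝ A a ∈ weakLeftCenter A := h ▸ ⟨a, rfl⟩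
  obtain ⟨f, hf⟩ := exists_eq_apply_of_mem_weakLeftCenter ha l
  have hf_zero : f = 0 := by
    ext b
    calc f b = l (arens1 A (inclusionInDoubleDual ℝ A a) (inclusionInDoubleDual ℝ A b)) :=
          (hf (inclusionInDoubleDual ℝ A b)).symm
      _ = l (inclusionInDoubleDual ℝ A (a * b)) := by rw [arens1_inclusionInDoubleDual]
      _ = 0 := hl _ ⟨a * b, rfl⟩
  rw [hf F, hf_zero, map_zero]

end
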